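/- Let d(n) be the number of nondecreasing Dyck words of semilength n and let p(n) be the sum, over all nondecreasing Dyck words of semilength n, of the number of peaks. Then p(n)/(n·d(n)) converges, as n → ∞, to 1/√5; that is, the average number of leaves of a random Elena tree with n nodes is asymptotic to n/√5. -/

import Mathlib

/-!
A nondecreasing Dyck word of semilength `n + 1` either stays strictly positive between its two
ends, and is then `U P D` for a nondecreasing `P` of semilength `n`, or it touches height `0`
inside. In the second case that return is a valley of altitude `0`, so by monotonicity the first
valley has altitude `0` too: the word is a pyramid `UᵃDᵃ` followed by an arbitrary nonempty
nondecreasing word. Elevation keeps the number of peaks and a pyramid adds one, whence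
`d(n+1) = d(n) + ∑_{m=1}^{n} d(m)` and `p(n+1) = p(n) + ∑_{m=1}^{n} (p(m) + d(m))`.
With Fibonacci numbers `F`, these give `d(n+1) = F(2n+1)` and
`5 p(n+1) = (2n+1) F(2n+2) + (4-n) F(2n+1)`, so `p(n) / (n d(n)) → (2φ - 1) / 5 = 1 / √5`.
-/

/-- Height of the prefix of length `i` of the word `w`
(`true` = U-step, `false` = D-step): number of U's minus number of D's. -/
def prefixHeight (w : List Bool) (i : ℕ) : ℤ :=
  ((w.take i).count true : ℤ) - ((w.take i).count false : ℤ)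

/-- `w` is a Dyck word: every prefix has nonnegative height and the whole word
has height 0 (equally many U's and D's). -/
def IsDyckWord (w : List Bool) : Prop :=
  (∀ i, i ≤ w.length → 0 ≤ prefixHeight w i) ∧ prefixHeight w w.length = 0

/-- A valley at (0-based) position `i`: a D-step immediately followed by a U-step. -/
def IsValley (w : List Bool) (i : ℕ) : Prop :=
  w[i]? = some false ∧ w[i + 1]? = some true

/-- A nondecreasing Dyck word: a Dyck word whose valley altitudes, read left to
right, form a nondecreasing sequence.  The altitude of a valley at position `i`
is the height of the prefix ending at that D-step, i.e. of length `i + 1`. -/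
def IsNondecDyck (w : List Bool) : Prop :=
  IsDyckWord w ∧ ∀ i j, IsValley w i → IsValley w j → i ≤ j →
    prefixHeight w (i + 1) ≤ prefixHeight w (j + 1)

/-- The set of nondecreasing Dyck words of semilength `n`. -/
def nondecDyck (n : ℕ) : Set (List Bool) :=
  {w | w.length = 2 * n ∧ IsNondecDyck w}

/-- `d n` = number of nondecreasing Dyck words of semilength `n`. -/
noncomputable def numNondecDyck (n : ℕ) : ℕ := (nondecDyck n).ncard

/-- Number of peaks of `w`: occurrences of a U-step immediately followed by a
D-step. -/
def numPeaks (w : List Bool) : ℕ :=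
  ((Finset.range w.length).filter fun i =>
    w[i]? = some true ∧ w[i + 1]? = some false).card

/-- `p n`: total number of peaks over all nondecreasing Dyck words of
semilength `n`. -/
noncomputable def totalPeaks (n : ℕ) : ℕ :=
  ∑ᶠ w ∈ nondecDyck n, numPeaks w

open List

section PrefixHeight

variable {w : List Bool} {i : ℕ}

@[simp]
lemma prefixHeight_zero (w : List Bool) : prefixHeight w 0 = 0 := by
  simp [prefixHeight]

lemma prefixHeight_append (x y : List Bool) (i : ℕ) :
    prefixHeight (x ++ y) i = prefixHeight x i + prefixHeight y (i - x.length) := by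
  simp only [prefixHeight, take_append, count_append]
  push_cast
  ring

lemma prefixHeight_of_length_le (h : w.length ≤ i) :
    prefixHeight w i = prefixHeight w w.length := by
  simp [prefixHeight, take_of_length_le h]

lemma prefixHeight_take (w : List Bool) (m i : ℕ) :
    prefixHeight (w.take m) i = prefixHeight w (min i m) := by
  simp [prefixHeight, take_take]

lemma prefixHeight_length (w : List Bool) :
    prefixHeight w w.length = (w.count true : ℤ) - w.count false := by
  simp [prefixHeight]

lemma prefixHeight_add_one (h : i < w.length) :
    prefixHeight w (i + 1) = prefixHeight w i + if w[i] then 1 else -1 := by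
  simp only [prefixHeight, take_add_one, getElem?_eq_getElem h, Option.toList_some, count_append]
  cases w[i] <;> simp <;> ring

lemma prefixHeight_cons_add_one (b : Bool) (l : List Bool) (i : ℕ) :
    prefixHeight (b :: l) (i + 1) = (if b then 1 else -1) + prefixHeight l i := by
  cases b <;> simp [prefixHeight] <;> ring

lemma prefixHeight_append_of_balanced {x : List Bool} (hx : prefixHeight x x.length = 0)
    (y : List Bool) (k : ℕ) :
    prefixHeight (x ++ y) (x.length + k) = prefixHeight y k := by
  rw [prefixHeight_append, prefixHeight_of_length_le (by omega), hx]
  simp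

end PrefixHeight

section DyckWord

variable {w : List Bool}

lemma IsDyckWord.getElem?_zero (hw : IsDyckWord w) (hne : w ≠ []) : w[0]? = some true := by
  have h0 : 0 < w.length := length_pos_iff.mpr hne
  have := hw.1 1 h0
  rw [prefixHeight_add_one h0, prefixHeight_zero, zero_add] at this
  rw [getElem?_eq_getElem h0]
  split_ifs at this with h <;> simp_all

lemma IsDyckWord.getLast? (hw : IsDyckWord w) (hne : w ≠ []) : w.getLast? = some false := by
  obtain ⟨k, hk⟩ : ∃ k, w.length = k + 1 := Nat.exists_eq_add_one.mpr (length_pos_iff.mpr hne)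
  have hlt : k < w.length := by omega
  have htot := hw.2
  have hnonneg := hw.1 k (by omega)
  rw [hk, prefixHeight_add_one hlt] at htot
  rw [getLast?_eq_getElem?, hk, Nat.add_sub_cancel, getElem?_eq_getElem hlt]
  split_ifs at htot with h <;> simp_all; omega

end DyckWord

section Valleys

def ValleysMonotone (w : List Bool) : Prop :=
  ∀ i j, IsValley w i → IsValley w j → i ≤ j →
    prefixHeight w (i + 1) ≤ prefixHeight w (j + 1)

lemma isNondecDyck_iff {w : List Bool} :
    IsNondecDyck w ↔ IsDyckWord w ∧ ValleysMonotone w := Iff.rfl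

lemma IsValley.add_one_lt_length {w : List Bool} {i : ℕ} (h : IsValley w i) :
    i + 1 < w.length := by
  by_contra hc
  simpa [getElem?_eq_none (not_lt.mp hc)] using h.2

lemma isValley_cons_add_one (b : Bool) (l : List Bool) (i : ℕ) :
    IsValley (b :: l) (i + 1) ↔ IsValley l i := Iff.rfl

lemma isValley_append_iff (x y : List Bool) (j : ℕ) :
    IsValley (x ++ y) j ↔ IsValley x j ∨
      (j + 1 = x.length ∧ x.getLast? = some false ∧ y[0]? = some true) ∨
      (x.length ≤ j ∧ IsValley y (j - x.length)) := by
  simp only [IsValley, getElem?_append, getLast?_eq_getElem?]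
  rcases lt_trichotomy (j + 1) x.length with h | h | h
  · simp [h, Nat.lt_of_succ_lt h, h.ne, show ¬x.length ≤ j by omega]
  · have hnone : x[j + 1]? = none := getElem?_eq_none (by omega)
    rw [← h]
    simp [hnone]
  · simp [show ¬j < x.length by omega, show ¬j + 1 < x.length by omega,
      show x.length ≤ j by omega, show j + 1 ≠ x.length by omega,
      show j + 1 - x.length = j - x.length + 1 by omega]

lemma IsValley.of_take {w : List Bool} {m i : ℕ} (h : IsValley (w.take m) i) : IsValley w i := by
  have := h.add_one_lt_length
  simp only [IsValley, getElem?_take] at h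
  rwa [if_pos (by simp at this; omega), if_pos (by simp at this; omega)] at h

lemma eq_replicate_append_replicate_of_forall_not_isValley {x : List Bool}
    (h : ∀ i, ¬IsValley x i) :
    x = replicate (x.count true) true ++ replicate (x.count false) false := by
  induction x with
  | nil => simp
  | cons b t ih =>
    have ht : ∀ i, ¬IsValley t i := fun i hi => h (i + 1) (by simpa [IsValley] using hi)
    cases b with
    | true => simpa [replicate_succ] using ih ht
    | false =>
      have hct : t.count true = 0 := by
        by_contra hc
        refine h 0 ⟨rfl, ?_⟩
        rw [getElem?_cons_succ, ih ht, getElem?_append_left (by simpa using Nat.pos_of_ne_zero hc)]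
        simp [Nat.pos_of_ne_zero hc]
      conv_lhs => rw [ih ht]
      simp [hct, replicate_succ]

end Valleys

section Peaks

@[simp]
lemma numPeaks_nil : numPeaks [] = 0 := rfl

lemma numPeaks_cons (b : Bool) (l : List Bool) :
    numPeaks (b :: l) = numPeaks l + if b = true ∧ l[0]? = some false then 1 else 0 := by
  simp only [numPeaks, Finset.card_filter, length_cons]
  rw [Finset.sum_range_succ']
  simp

lemma numPeaks_append (x y : List Bool) :
    numPeaks (x ++ y) = numPeaks x + numPeaks y +
      if x.getLast? = some true ∧ y[0]? = some false then 1 else 0 := by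
  induction x with
  | nil => simp
  | cons b t ih =>
    rcases eq_or_ne t [] with rfl | ht
    · simp [numPeaks_cons]
    · rw [cons_append, numPeaks_cons, numPeaks_cons, ih,
        getElem?_append_left (length_pos_iff.mpr ht), getLast?_cons, getLast?_eq_some_getLast ht]
      simp only [Option.getD_some]
      omega

lemma numPeaks_replicate (a : ℕ) (b : Bool) : numPeaks (replicate a b) = 0 := by
  induction a with
  | zero => rfl
  | succ a ih => cases a <;> simp_all [replicate_succ, numPeaks_cons]

end Peaks

section Elevate

def elevate (P : List Bool) : List Bool := true :: (P ++ [false])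

variable {P : List Bool}

@[simp]
lemma length_elevate (P : List Bool) : (elevate P).length = P.length + 2 := by
  simp [elevate]

lemma elevate_injective : Function.Injective elevate := by
  intro P P' h
  simpa [elevate] using h

lemma prefixHeight_elevate_add_one {k : ℕ} (hk : k ≤ P.length) :
    prefixHeight (elevate P) (k + 1) = prefixHeight P k + 1 := by
  rw [elevate, prefixHeight_cons_add_one, prefixHeight_append, Nat.sub_eq_zero_of_le hk]
  simp [add_comm]

lemma prefixHeight_elevate_length (P : List Bool) :
    prefixHeight (elevate P) (elevate P).length = prefixHeight P P.length := by
  rw [length_elevate, elevate, prefixHeight_cons_add_one, prefixHeight_append,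
    prefixHeight_of_length_le (Nat.le_succ _)]
  simp [prefixHeight]

lemma isValley_elevate_iff {i : ℕ} :
    IsValley (elevate P) i ↔ ∃ k, i = k + 1 ∧ IsValley P k := by
  rcases i with _ | k
  · simp [elevate, IsValley]
  · rw [elevate, isValley_cons_add_one, isValley_append_iff]
    simp [IsValley]

lemma isDyckWord_elevate (hP : IsDyckWord P) : IsDyckWord (elevate P) := by
  refine ⟨fun i hi => ?_, by rw [prefixHeight_elevate_length, hP.2]⟩
  rcases i with _ | k
  · simp
  · rcases (Nat.lt_or_ge k (P.length + 1)) with hk | hk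
    · rw [prefixHeight_elevate_add_one (by omega)]
      linarith [hP.1 k (by omega)]
    · rw [show k + 1 = (elevate P).length by simp at hi ⊢; omega, prefixHeight_elevate_length,
        hP.2]

lemma valleysMonotone_elevate_iff : ValleysMonotone (elevate P) ↔ ValleysMonotone P := by
  have height (k : ℕ) (hk : IsValley P k) :
      prefixHeight (elevate P) (k + 1 + 1) = prefixHeight P (k + 1) + 1 :=
    prefixHeight_elevate_add_one hk.add_one_lt_length.le
  constructor
  · intro h i j hi hj hij
    have := h (i + 1) (j + 1) (isValley_elevate_iff.mpr ⟨i, rfl, hi⟩)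
      (isValley_elevate_iff.mpr ⟨j, rfl, hj⟩) (by omega)
    rw [height i hi, height j hj] at this
    linarith
  · rintro h _ _ hi' hj' hij
    obtain ⟨i, rfl, hi⟩ := isValley_elevate_iff.mp hi'
    obtain ⟨j, rfl, hj⟩ := isValley_elevate_iff.mp hj'
    rw [height i hi, height j hj]
    linarith [h i j hi hj (by omega)]

lemma numPeaks_elevate (hP : IsDyckWord P) (hne : P ≠ []) :
    numPeaks (elevate P) = numPeaks P := by
  rw [elevate, ← singleton_append, numPeaks_append, numPeaks_append,
    getElem?_append_left (length_pos_iff.mpr hne), hP.getElem?_zero hne, hP.getLast? hne]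
  simp [numPeaks_cons]

end Elevate

section Pyramid

def pyramid (a : ℕ) : List Bool := replicate a true ++ replicate a false

variable {a : ℕ} {Q : List Bool}

@[simp]
lemma length_pyramid (a : ℕ) : (pyramid a).length = 2 * a := by
  simp [pyramid, two_mul]

lemma getElem?_pyramid (a i : ℕ) :
    (pyramid a)[i]? = if i < a then some true else if i < 2 * a then some false else none := by
  simp only [pyramid, getElem?_append, length_replicate, getElem?_replicate]
  split_ifs <;> first | rfl | omega

lemma not_isValley_pyramid (a i : ℕ) : ¬IsValley (pyramid a) i := by
  simp only [IsValley, getElem?_pyramid]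
  split_ifs <;> simp; omega

lemma getLast?_pyramid (ha : 1 ≤ a) : (pyramid a).getLast? = some false := by
  rw [getLast?_eq_getElem?, length_pyramid, getElem?_pyramid]
  split_ifs <;> first | rfl | omega

lemma prefixHeight_pyramid (a i : ℕ) :
    prefixHeight (pyramid a) i = (min i a : ℕ) - (min (i - a) a : ℕ) := by
  rw [pyramid, prefixHeight_append]
  simp [prefixHeight, take_replicate, count_replicate, ← sub_eq_add_neg]

lemma prefixHeight_pyramid_append (a : ℕ) (Q : List Bool) (k : ℕ) :
    prefixHeight (pyramid a ++ Q) (2 * a + k) = prefixHeight Q k :=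
  length_pyramid a ▸ prefixHeight_append_of_balanced
    (by rw [length_pyramid, prefixHeight_pyramid, two_mul, Nat.add_sub_cancel]; simp) Q k

lemma eq_of_pyramid_append_eq {b : ℕ} {Q' : List Bool} (ha : 1 ≤ a) (hb : 1 ≤ b)
    (h : pyramid a ++ Q = pyramid b ++ Q') : a = b := by
  wlog hab : a < b generalizing a b Q Q'
  · rcases Nat.lt_or_ge b a with hba | hba
    · exact (this hb ha h.symm hba).symm
    · omega
  have hQ : (pyramid a ++ Q)[a]? = some false := by
    rw [getElem?_append_left (by simp; omega), getElem?_pyramid]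
    simp; omega
  have hQ' : (pyramid b ++ Q')[a]? = some true := by
    rw [getElem?_append_left (by simp; omega), getElem?_pyramid, if_pos hab]
  simp [h, hQ'] at hQ

lemma isValley_pyramid_append_iff (ha : 1 ≤ a) {j : ℕ} :
    IsValley (pyramid a ++ Q) j ↔
      (j + 1 = 2 * a ∧ Q[0]? = some true) ∨ (2 * a ≤ j ∧ IsValley Q (j - 2 * a)) := by
  simp [isValley_append_iff, not_isValley_pyramid, getLast?_pyramid ha]

lemma isDyckWord_pyramid_append_iff : IsDyckWord (pyramid a ++ Q) ↔ IsDyckWord Q := by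
  have htotal : prefixHeight (pyramid a ++ Q) (pyramid a ++ Q).length =
      prefixHeight Q Q.length := by
    simpa using prefixHeight_pyramid_append a Q Q.length
  rw [IsDyckWord, IsDyckWord, htotal]
  refine and_congr_left fun _ => ⟨fun h k hk => ?_, fun h i hi => ?_⟩
  · rw [← prefixHeight_pyramid_append a]
    exact h _ (by simp; omega)
  · rcases le_or_gt i (2 * a) with hia | hia
    · rw [prefixHeight_append, length_pyramid, Nat.sub_eq_zero_of_le hia, prefixHeight_zero,
        add_zero, prefixHeight_pyramid]
      omega
    · obtain ⟨k, rfl⟩ := Nat.exists_eq_add_of_le hia.le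
      rw [prefixHeight_pyramid_append]
      exact h k (by simp at hi; omega)

lemma isNondecDyck_pyramid_append_iff (ha : 1 ≤ a) :
    IsNondecDyck (pyramid a ++ Q) ↔ IsNondecDyck Q := by
  have height (k : ℕ) : prefixHeight (pyramid a ++ Q) (2 * a + k + 1) = prefixHeight Q (k + 1) :=
    prefixHeight_pyramid_append a Q (k + 1)
  rw [isNondecDyck_iff, isNondecDyck_iff, isDyckWord_pyramid_append_iff]
  refine and_congr_right fun hQ => ⟨fun h i j hi hj hij => ?_, fun h i j hi hj hij => ?_⟩
  · have valley {k : ℕ} (hk : IsValley Q k) : IsValley (pyramid a ++ Q) (2 * a + k) :=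
      (isValley_pyramid_append_iff ha).mpr (Or.inr ⟨by omega, by simpa using hk⟩)
    simpa only [height] using h _ _ (valley hi) (valley hj) (by omega)
  · rw [isValley_pyramid_append_iff ha] at hi hj
    rcases hi with ⟨hi, -⟩ | ⟨hi, hi'⟩ <;> rcases hj with ⟨hj, -⟩ | ⟨hj, hj'⟩
    · rw [show i = j by omega]
    · obtain ⟨k, rfl⟩ := Nat.exists_eq_add_of_le hj
      rw [hi, height, ← add_zero (2 * a), prefixHeight_pyramid_append, prefixHeight_zero]
      exact hQ.1 _ (by simpa using hj'.add_one_lt_length.le)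
    · omega
    · obtain ⟨i, rfl⟩ := Nat.exists_eq_add_of_le hi
      obtain ⟨j, rfl⟩ := Nat.exists_eq_add_of_le hj
      simp only [Nat.add_sub_cancel_left] at hi' hj'
      rw [height, height]
      exact h i j hi' hj' (by omega)

lemma numPeaks_pyramid_append (ha : 1 ≤ a) (Q : List Bool) :
    numPeaks (pyramid a ++ Q) = numPeaks Q + 1 := by
  rw [numPeaks_append, pyramid, numPeaks_append, numPeaks_replicate, numPeaks_replicate,
    ← pyramid, getLast?_pyramid ha]
  simp [getElem?_replicate, getLast?_replicate, Nat.one_le_iff_ne_zero.mp ha, add_comm]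

end Pyramid

section Decomposition

variable {w : List Bool}

lemma IsDyckWord.exists_eq_elevate (hw : IsDyckWord w) (hne : w ≠ [])
    (hpos : ∀ i, 0 < i → i < w.length → 0 < prefixHeight w i) :
    ∃ P, IsDyckWord P ∧ w = elevate P := by
  have hhead := hw.getElem?_zero hne
  have hlast := hw.getLast? hne
  obtain ⟨b, t, rfl⟩ := exists_cons_of_ne_nil hne
  rcases eq_nil_or_concat' t with rfl | ⟨P, c, rfl⟩
  · simp_all
  rw [← cons_append, getLast?_concat] at hlast
  obtain ⟨rfl, rfl⟩ : b = true ∧ c = false := by simp_all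
  change IsDyckWord (elevate P) at hw
  change ∀ i, 0 < i → i < (elevate P).length → 0 < prefixHeight (elevate P) i at hpos
  refine ⟨P, ⟨fun k hk => ?_, ?_⟩, rfl⟩
  · have := hpos (k + 1) k.succ_pos (by simp; omega)
    rw [prefixHeight_elevate_add_one hk] at this
    omega
  · rw [← prefixHeight_elevate_length, hw.2]

lemma IsDyckWord.isValley_of_prefixHeight_eq_zero (hw : IsDyckWord w) {m : ℕ} (hm0 : 0 < m)
    (hm : m < w.length) (hz : prefixHeight w m = 0) : IsValley w (m - 1) := by
  obtain ⟨k, rfl⟩ := Nat.exists_eq_add_one.mpr hm0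
  have hdown := prefixHeight_add_one (w := w) (i := k) (by omega)
  have hup := prefixHeight_add_one hm
  have h1 := hw.1 k (by omega)
  have h2 := hw.1 (k + 1 + 1) hm
  simp only [IsValley, Nat.add_sub_cancel, getElem?_eq_getElem hm,
    getElem?_eq_getElem (show k < w.length by omega)]
  split_ifs at hdown hup <;> simp_all; omega

lemma IsNondecDyck.exists_eq_pyramid_append (hw : IsNondecDyck w) {m : ℕ} (hm0 : 0 < m)
    (hm : m < w.length) (hz : prefixHeight w m = 0) :
    ∃ a Q, 1 ≤ a ∧ Q ≠ [] ∧ w = pyramid a ++ Q := by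
  classical
  have hvalley := hw.1.isValley_of_prefixHeight_eq_zero hm0 hm hz
  have hex : ∃ i, IsValley w i := ⟨_, hvalley⟩
  set i := Nat.find hex
  have hi : IsValley w i := Nat.find_spec hex
  have hzero : prefixHeight w (i + 1) = 0 := by
    refine le_antisymm ?_ (hw.1.1 _ hi.add_one_lt_length.le)
    simpa [Nat.sub_add_cancel hm0, hz] using hw.2 _ _ hi hvalley (Nat.find_min' hex hvalley)
  set x := w.take (i + 1) with hx
  have hxlen : x.length = i + 1 := by simpa [hx] using hi.add_one_lt_length.le
  have hnv : ∀ k, ¬IsValley x k := fun k hk =>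
    Nat.find_min hex (by have := hk.add_one_lt_length; omega) hk.of_take
  have hcount : x.count true = x.count false := by
    have := prefixHeight_take w (i + 1) (i + 1)
    rw [min_self, hzero, ← hx, ← hxlen, prefixHeight_length] at this
    omega
  have hsum := count_true_add_count_false x
  refine ⟨x.count true, w.drop (i + 1), by omega, ?_, ?_⟩
  · simpa [← length_pos_iff] using hi.add_one_lt_length
  · conv_lhs => rw [← take_append_drop (i + 1) w, ← hx,
      eq_replicate_append_replicate_of_forall_not_isValley hnv]
    rw [pyramid, hcount]

end Decomposition

section Counting

lemma mem_nondecDyck_succ_iff {n : ℕ} {w : List Bool} :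
    w ∈ nondecDyck (n + 1) ↔ (∃ P ∈ nondecDyck n, elevate P = w) ∨
      ∃ m ∈ Finset.Icc 1 n, ∃ Q ∈ nondecDyck m, pyramid (n + 1 - m) ++ Q = w := by
  constructor
  · rintro ⟨hlen, hw⟩
    by_cases hz : ∃ m, 0 < m ∧ m < w.length ∧ prefixHeight w m = 0
    · obtain ⟨m, hm0, hm, hz⟩ := hz
      obtain ⟨a, Q, ha, hQ, rfl⟩ := hw.exists_eq_pyramid_append hm0 hm hz
      have hQlen := length_pos_iff.mpr hQ
      simp only [length_append, length_pyramid] at hlen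
      refine Or.inr ⟨n + 1 - a, by simp; omega, Q, ⟨by omega, ?_⟩, ?_⟩
      · exact (isNondecDyck_pyramid_append_iff ha).mp hw
      · rw [Nat.sub_sub_self (by omega)]
    · push Not at hz
      obtain ⟨P, hP, rfl⟩ := hw.1.exists_eq_elevate (ne_nil_of_length_pos (by omega))
        fun i hi0 hi => lt_of_le_of_ne (hw.1.1 i hi.le) (hz i hi0 hi).symm
      simp only [length_elevate] at hlen
      exact Or.inl ⟨P, ⟨by omega, hP, valleysMonotone_elevate_iff.mp hw.2⟩, rfl⟩
  · rintro (⟨P, ⟨hlen, hP⟩, rfl⟩ | ⟨m, hm, Q, ⟨hlen, hQ⟩, rfl⟩)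
    · exact ⟨by simp [hlen]; ring, isDyckWord_elevate hP.1,
        valleysMonotone_elevate_iff.mpr hP.2⟩
    · simp only [Finset.mem_Icc] at hm
      exact ⟨by simp [hlen]; omega, (isNondecDyck_pyramid_append_iff (by omega)).mpr hQ⟩

lemma elevate_ne_pyramid_append {P Q : List Bool} {a : ℕ} (hP : IsDyckWord P) (ha : 1 ≤ a)
    (hlen : 2 * a ≤ P.length + 1) : elevate P ≠ pyramid a ++ Q := by
  intro h
  have hpos : 0 < prefixHeight (elevate P) (2 * a - 1 + 1) := by
    rw [prefixHeight_elevate_add_one (by omega)]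
    linarith [hP.1 (2 * a - 1) (by omega)]
  have hzero := prefixHeight_pyramid_append a Q 0
  rw [h, Nat.sub_add_cancel (by omega)] at hpos
  simp_all

lemma nondecDyck_finite (n : ℕ) : (nondecDyck n).Finite :=
  (List.finite_length_eq Bool (2 * n)).subset fun _ hw => hw.1

noncomputable def nondecDyckFinset (n : ℕ) : Finset (List Bool) := (nondecDyck_finite n).toFinset

@[simp]
lemma mem_nondecDyckFinset {n : ℕ} {w : List Bool} :
    w ∈ nondecDyckFinset n ↔ w ∈ nondecDyck n :=
  Set.Finite.mem_toFinset _

lemma nondecDyckFinset_succ (n : ℕ) :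
    nondecDyckFinset (n + 1) = (nondecDyckFinset n).image elevate ∪
      (Finset.Icc 1 n).biUnion fun m => (nondecDyckFinset m).image (pyramid (n + 1 - m) ++ ·) := by
  ext w
  simp [mem_nondecDyck_succ_iff]

lemma sum_nondecDyckFinset_succ {M : Type*} [AddCommMonoid M] (f : List Bool → M) (n : ℕ) :
    ∑ w ∈ nondecDyckFinset (n + 1), f w = ∑ P ∈ nondecDyckFinset n, f (elevate P) +
      ∑ m ∈ Finset.Icc 1 n, ∑ Q ∈ nondecDyckFinset m, f (pyramid (n + 1 - m) ++ Q) := by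
  rw [nondecDyckFinset_succ, Finset.sum_union, Finset.sum_image elevate_injective.injOn,
    Finset.sum_biUnion]
  · simp_rw [Finset.sum_image fun _ _ _ _ h => append_cancel_left h]
  · intro m hm m' hm' hne
    simp only [Finset.coe_Icc, Set.mem_Icc] at hm hm'
    simp only [Function.onFun, Finset.disjoint_left, Finset.mem_image, mem_nondecDyckFinset]
    rintro _ ⟨Q, -, rfl⟩ ⟨Q', -, h⟩
    have := eq_of_pyramid_append_eq (by omega) (by omega) h
    omega
  · simp only [Finset.disjoint_left, Finset.mem_image, Finset.mem_biUnion, Finset.mem_Icc,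
      mem_nondecDyckFinset]
    rintro _ ⟨P, hP, rfl⟩ ⟨m, hm, Q, -, h⟩
    exact elevate_ne_pyramid_append hP.2.1 (by omega) (by rw [hP.1]; omega) h.symm

end Counting

section Recurrences

open Finset

lemma numNondecDyck_eq_card (n : ℕ) : numNondecDyck n = (nondecDyckFinset n).card :=
  Set.ncard_eq_toFinset_card _ _

lemma totalPeaks_eq_sum (n : ℕ) : totalPeaks n = ∑ w ∈ nondecDyckFinset n, numPeaks w :=
  finsum_mem_eq_finite_toFinset_sum _ _

lemma nondecDyckFinset_zero : nondecDyckFinset 0 = {[]} := by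
  ext w
  simp only [mem_nondecDyckFinset, nondecDyck, mul_zero, length_eq_zero_iff, Set.mem_ofPred_eq,
    Finset.mem_singleton, and_iff_left_iff_imp]
  rintro rfl
  refine ⟨⟨fun i _ => by simp [prefixHeight], rfl⟩, fun i _ hi => ?_⟩
  simp [IsValley] at hi

lemma numNondecDyck_succ (n : ℕ) :
    numNondecDyck (n + 1) = numNondecDyck n + ∑ m ∈ Icc 1 n, numNondecDyck m := by
  simp only [numNondecDyck_eq_card, card_eq_sum_ones, sum_nondecDyckFinset_succ fun _ => 1]

lemma totalPeaks_succ {n : ℕ} (hn : 1 ≤ n) :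
    totalPeaks (n + 1) = totalPeaks n + ∑ m ∈ Icc 1 n, (totalPeaks m + numNondecDyck m) := by
  simp only [totalPeaks_eq_sum, numNondecDyck_eq_card, sum_nondecDyckFinset_succ]
  congr 1
  · refine sum_congr rfl fun P hP => numPeaks_elevate (mem_nondecDyckFinset.mp hP).2.1 ?_
    rintro rfl
    simp [nondecDyck] at hP
    omega
  · refine sum_congr rfl fun m hm => ?_
    rw [card_eq_sum_ones, ← sum_add_distrib]
    exact sum_congr rfl fun Q _ => numPeaks_pyramid_append (by simp at hm; omega) Q

lemma totalPeaks_one : totalPeaks 1 = 1 := by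
  rw [totalPeaks_eq_sum, sum_nondecDyckFinset_succ, nondecDyckFinset_zero]
  rfl

end Recurrences

section ClosedForms

open Finset Nat

lemma numNondecDyck_succ_eq_fib (m : ℕ) :
    numNondecDyck (m + 1) = fib (2 * m + 1) ∧
      ∑ k ∈ Icc 1 (m + 1), numNondecDyck k = fib (2 * m + 2) := by
  induction m with
  | zero =>
    have h1 : numNondecDyck 1 = 1 := by
      rw [numNondecDyck_succ, numNondecDyck_eq_card, nondecDyckFinset_zero]
      rfl
    simp [h1]
  | succ m ih =>
    have h1 : numNondecDyck (m + 2) = fib (2 * m + 3) := by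
      rw [numNondecDyck_succ, ih.1, ih.2, ← fib_add_two]
    refine ⟨h1, ?_⟩
    rw [sum_Icc_succ_top (by omega), ih.2, h1, ← fib_add_two]
    rfl

lemma five_mul_totalPeaks_succ (m : ℕ) :
    5 * (totalPeaks (m + 1) : ℤ) = (2 * m + 1) * fib (2 * m + 2) + (4 - m) * fib (2 * m + 1) ∧
      5 * (∑ k ∈ Icc 1 (m + 1), totalPeaks k : ℤ) =
        (1 - m) * fib (2 * m + 2) + 2 * (m + 1) * fib (2 * m + 3) := by
  induction m with
  | zero => simp [totalPeaks_one, show fib 3 = 2 from rfl]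
  | succ m ih =>
    have h3 : (fib (2 * m + 3) : ℤ) = fib (2 * m + 1) + fib (2 * m + 2) := by
      exact_mod_cast fib_add_two
    have h4 : (fib (2 * m + 4) : ℤ) = fib (2 * m + 2) + fib (2 * m + 3) := by
      exact_mod_cast fib_add_two
    have h5 : (fib (2 * m + 5) : ℤ) = fib (2 * m + 3) + fib (2 * m + 4) := by
      exact_mod_cast fib_add_two
    have hrec : (totalPeaks (m + 2) : ℤ) = totalPeaks (m + 1) +
        ∑ k ∈ Icc 1 (m + 1), (totalPeaks k : ℤ) + fib (2 * m + 2) := by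
      rw [totalPeaks_succ (by omega), sum_add_distrib, (numNondecDyck_succ_eq_fib m).2]
      push_cast
      ring
    have hp : 5 * (totalPeaks (m + 2) : ℤ) =
        (2 * (m + 1) + 1) * fib (2 * m + 4) + (4 - (m + 1)) * fib (2 * m + 3) := by
      linear_combination 5 * hrec + ih.1 + ih.2 - (2 * m + 3) * h4 + (m - 4) * h3
    refine ⟨by push_cast; exact hp, ?_⟩
    rw [sum_Icc_succ_top (by omega), show 2 * (m + 1) + 2 = 2 * m + 4 by ring,
      show 2 * (m + 1) + 3 = 2 * m + 5 by ring]
    push_cast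
    linear_combination ih.2 + hp - (2 * m + 4) * h5 + (m - 1) * h4

end ClosedForms

open Filter Topology Real
open scoped goldenRatio

lemma totalPeaks_succ_div_eq (m : ℕ) :
    (totalPeaks (m + 1) : ℝ) / ((m + 1 : ℕ) * numNondecDyck (m + 1)) =
      ((2 - 1 / ((m : ℝ) + 1)) * (Nat.fib (2 * m + 1 + 1) / Nat.fib (2 * m + 1)) +
        5 * (1 / ((m : ℝ) + 1)) - 1) / 5 := by
  have hp := congrArg (Int.cast : ℤ → ℝ) (five_mul_totalPeaks_succ m).1
  push_cast at hp
  have hfib : (Nat.fib (2 * m + 1) : ℝ) ≠ 0 := by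
    exact_mod_cast (Nat.fib_pos.mpr (by omega)).ne'
  rw [(numNondecDyck_succ_eq_fib m).1]
  field_simp
  push_cast
  linear_combination ((m : ℝ) + 1) * hp

lemma one_div_sqrt_five_eq : 1 / √5 = (2 * φ - 1) / 5 := by
  rw [show φ = (1 + √5) / 2 from rfl]
  field_simp
  linear_combination -Real.mul_self_sqrt (show (0 : ℝ) ≤ 5 by norm_num)

/-- `p(n)/(n·d(n)) → 1/√5` as `n → ∞`: the average number of leaves of a
random Elena tree with `n` nodes is asymptotic to `n/√5`. -/
theorem avg_leaves :
    Filter.Tendsto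
      (fun n : ℕ => (totalPeaks n : ℝ) / ((n : ℝ) * (numNondecDyck n : ℝ)))
      Filter.atTop (nhds (1 / Real.sqrt 5)) := by
  have hu : Tendsto (fun m : ℕ => 1 / ((m : ℝ) + 1)) atTop (𝓝 0) :=
    tendsto_one_div_add_atTop_nhds_zero_nat
  have hr : Tendsto (fun m : ℕ => (Nat.fib (2 * m + 1 + 1) : ℝ) / Nat.fib (2 * m + 1))
      atTop (𝓝 φ) :=
    tendsto_fib_succ_div_fib_atTop.comp <|
      tendsto_atTop_atTop.mpr fun b => ⟨b, fun m hm => by omega⟩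
  have hlim := (((tendsto_const_nhds (x := (2 : ℝ))).sub hu).mul hr).add (hu.const_mul 5)
    |>.sub_const 1 |>.div_const 5
  rw [← tendsto_add_atTop_iff_nat 1, one_div_sqrt_five_eq]
  convert hlim using 2 with m
  · exact_mod_cast totalPeaks_succ_div_eq m
  · ring
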